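/- Let A be a 2×2 complex matrix whose two eigenvalues λ₁ and λ₂ satisfy |λ₁| ≠ |λ₂|. Then A cannot be written as PU + U*P^⊥ for any orthogonal projection P and unitary U on ℂ². -/

import Mathlib

/-!
Conjugating by a unitary that diagonalises `P` turns `PU + U*P^⊥` into `DW + W*(1 - D)` with
`D = diag(d₀, d₁)`, `dᵢ ∈ {0, 1}`, and `W` unitary; the characteristic polynomial is unchanged.
If `d₀ = d₁` this matrix is `W` or `W*`, so both eigenvalues lie on the unit circle. Otherwise it is
triangular with diagonal entries `w₀₀, w̄₁₁` (or `w̄₀₀, w₁₁`), and a `2 × 2` unitary satisfies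
`|w₀₀|² = 1 - |w₁₀|² = |w₁₁|²`.
-/

open Matrix Polynomial

def puForm {R : Type*} [Ring R] [StarRing R] (p u : R) : R := p * u + star u * (1 - p)

lemma map_puForm {R S F : Type*} [Ring R] [StarRing R] [Ring S] [StarRing S] [FunLike F R S]
    [RingHomClass F R S] [StarHomClass F R S] (φ : F) (p u : R) :
    φ (puForm p u) = puForm (φ p) (φ u) := by
  simp only [puForm, map_add, map_mul, map_star, map_sub, map_one]

namespace Matrix

variable {n : Type*} [Fintype n] [DecidableEq n]

lemma charpoly_conjStarAlgAut {R : Type*} [CommRing R] [StarRing R]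
    (u : unitary (Matrix n n R)) (M : Matrix n n R) :
    (Unitary.conjStarAlgAut R _ u M).charpoly = M.charpoly := by
  rw [Unitary.conjStarAlgAut_apply, charpoly_mul_comm, ← mul_assoc, Unitary.coe_star_mul_self,
    one_mul]

lemma exists_eq_conjStarAlgAut_diagonal_of_isStarProjection {𝕜 : Type*} [RCLike 𝕜]
    {P : Matrix n n 𝕜} (hP : IsStarProjection P) :
    ∃ (u : unitary (Matrix n n 𝕜)) (d : n → 𝕜), (∀ i, d i = 0 ∨ d i = 1) ∧
      P = Unitary.conjStarAlgAut 𝕜 _ u (diagonal d) := by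
  have hH : P.IsHermitian := hP.isSelfAdjoint
  refine ⟨hH.eigenvectorUnitary, _, fun i => ?_, hH.spectral_theorem⟩
  have hD := (hP.map (Unitary.conjStarAlgAut 𝕜 _ (star hH.eigenvectorUnitary))).isIdempotentElem
  rw [hH.conjStarAlgAut_star_eigenvectorUnitary, IsIdempotentElem, diagonal_mul_diagonal] at hD
  exact IsIdempotentElem.iff_eq_zero_or_one.mp (congrFun (diagonal_injective hD) i)

open scoped Matrix.Norms.L2Operator in
lemma norm_eq_one_of_mem_unitary_of_isRoot_charpoly {U : Matrix n n ℂ}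
    (hU : U ∈ unitary (Matrix n n ℂ)) {μ : ℂ} (hμ : U.charpoly.IsRoot μ) : ‖μ‖ = 1 :=
  spectrum.norm_eq_one_of_unitary hU (mem_spectrum_of_isRoot_charpoly hμ)

lemma eq_or_eq_of_isRoot_charpoly_of_mul_eq_zero {R : Type*} [CommRing R] [IsDomain R]
    {B : Matrix (Fin 2) (Fin 2) R} (hB : B 0 1 * B 1 0 = 0) {μ : R}
    (hμ : B.charpoly.IsRoot μ) : μ = B 0 0 ∨ μ = B 1 1 := by
  have : (μ - B 0 0) * (μ - B 1 1) = 0 := by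
    rw [← hμ.eq_zero, charpoly_fin_two, trace_fin_two, det_fin_two]
    simp only [eval_add, eval_sub, eval_pow, eval_mul, eval_C, eval_X]
    linear_combination hB
  simpa [sub_eq_zero] using this

lemma norm_apply_zero_zero_eq_of_mem_unitary {𝕜 : Type*} [RCLike 𝕜]
    {W : Matrix (Fin 2) (Fin 2) 𝕜} (hW : W ∈ unitary (Matrix (Fin 2) (Fin 2) 𝕜)) :
    ‖W 0 0‖ = ‖W 1 1‖ := by
  have h₀ : (star W * W) 0 0 = (1 : Matrix (Fin 2) (Fin 2) 𝕜) 0 0 := by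
    rw [Unitary.star_mul_self_of_mem hW]
  have h₁ : (W * star W) 1 1 = (1 : Matrix (Fin 2) (Fin 2) 𝕜) 1 1 := by
    rw [Unitary.mul_star_self_of_mem hW]
  simp only [mul_apply, Fin.sum_univ_two, star_apply, one_apply_eq, RCLike.star_def] at h₀ h₁
  have : (‖W 0 0‖ ^ 2 : 𝕜) = ‖W 1 1‖ ^ 2 := by
    rw [← RCLike.conj_mul, ← RCLike.mul_conj]
    linear_combination h₀ - h₁
  exact (pow_left_inj₀ (norm_nonneg _) (norm_nonneg _) two_ne_zero).mp (mod_cast this)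

lemma puForm_diagonal_apply {R : Type*} [CommRing R] [StarRing R] (d : n → R)
    (W : Matrix n n R) (i j : n) :
    puForm (diagonal d) W i j = d i * W i j + star (W j i) * (1 - d j) := by
  simp only [puForm, Matrix.mul_sub, Matrix.mul_one, add_apply, sub_apply, diagonal_mul,
    mul_diagonal, star_apply]
  ring

lemma exists_norm_eq_of_isRoot_charpoly_puForm_diagonal {d : Fin 2 → ℂ}
    (hd : ∀ i, d i = 0 ∨ d i = 1) {W : Matrix (Fin 2) (Fin 2) ℂ}
    (hW : W ∈ unitary (Matrix (Fin 2) (Fin 2) ℂ)) :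
    ∃ r : ℝ, ∀ μ, (puForm (diagonal d) W).charpoly.IsRoot μ → ‖μ‖ = r := by
  by_cases hconst : d 0 = d 1
  · refine ⟨1, fun μ hμ => norm_eq_one_of_mem_unitary_of_isRoot_charpoly ?_ hμ⟩
    rcases hd 0 with h | h
    · have : d = 0 := funext (Fin.forall_fin_two.2 ⟨h, hconst ▸ h⟩)
      simpa [this, puForm] using Unitary.star_mem hW
    · have : d = 1 := funext (Fin.forall_fin_two.2 ⟨h, hconst ▸ h⟩)
      simpa [this, puForm] using hW
  · have hoff : puForm (diagonal d) W 0 1 * puForm (diagonal d) W 1 0 = 0 := by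
      rcases hd 0 with h₀ | h₀ <;> rcases hd 1 with h₁ | h₁ <;>
        simp_all [puForm_diagonal_apply]
    have hdiag : ∀ i, ‖puForm (diagonal d) W i i‖ = ‖W i i‖ := fun i => by
      rcases hd i with h | h <;> simp [puForm_diagonal_apply, h]
    refine ⟨‖W 0 0‖, fun μ hμ => ?_⟩
    rcases eq_or_eq_of_isRoot_charpoly_of_mul_eq_zero hoff hμ with rfl | rfl
    · exact hdiag 0
    · rw [hdiag 1, norm_apply_zero_zero_eq_of_mem_unitary hW]

end Matrix

theorem not_PU_form_of_ne_abs_eigenvalues (A : Matrix (Fin 2) (Fin 2) ℂ) (l₁ l₂ : ℂ)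
    (hchar : A.charpoly = (X - Polynomial.C l₁) * (X - Polynomial.C l₂))
    (hne : ‖l₁‖ ≠ ‖l₂‖) :
    ¬ ∃ P U : Matrix (Fin 2) (Fin 2) ℂ,
        Pᴴ = P ∧ P * P = P ∧ Uᴴ * U = 1 ∧ U * Uᴴ = 1 ∧
        A = P * U + Uᴴ * (1 - P) := by
  rintro ⟨P, U, hP, hP2, hU1, hU2, rfl⟩
  obtain ⟨u, d, hd, rfl⟩ := exists_eq_conjStarAlgAut_diagonal_of_isStarProjection ⟨hP2, hP⟩
  set φ := Unitary.conjStarAlgAut ℂ _ u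
  have hW : φ.symm U ∈ unitary _ := Unitary.map_mem φ.symm (Unitary.mem_iff.mpr ⟨hU1, hU2⟩)
  have hA : φ (diagonal d) * U + Uᴴ * (1 - φ (diagonal d)) =
      φ (puForm (diagonal d) (φ.symm U)) := by
    rw [map_puForm, φ.apply_symm_apply]
    rfl
  obtain ⟨r, hr⟩ := exists_norm_eq_of_isRoot_charpoly_puForm_diagonal hd hW
  rw [hA, charpoly_conjStarAlgAut] at hchar
  exact hne ((hr l₁ (by simp [hchar])).trans (hr l₂ (by simp [hchar])).symm)
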